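/- Let W : ℝ^{3×3} → [0,∞) satisfy (H₁): β'|ξ| ≤ W(ξ) ≤ β(1+|ξ|), (H₂): |W^∞(ξ) − W(ξ)| ≤ C(1+|ξ|^{1−r}) for some r ∈ (0,1), and a global Lipschitz condition. Then for every z, b ∈ ℝ³ and ν ∈ S¹, the recession function of Q*W agrees with Q* of the recession function of W on rank-one-plus-vector arguments: (Q*W)^∞(z⊗ν|b) = Q*(W^∞)(z⊗ν|b). -/

import Mathlib

open MeasureTheory Filter Topology

noncomputable section

abbrev M33 := Fin 3 → Fin 3 → ℝ
abbrev M32 := Fin 3 → Fin 2 → ℝ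
abbrev V3 := Fin 3 → ℝ
abbrev X3 := Fin 3 → ℝ
abbrev X2 := Fin 2 → ℝ

/-- The unit cell `Q' × I = (-1/2,1/2)³`. -/
def cube3 : Set X3 := {x | ∀ i, x i ∈ Set.Ioo (-(1:ℝ)/2) (1/2)}

/-- The transverse direction `e₃`. -/
def e3 : X3 := Pi.single 2 1

/-- The in-plane gradient `∇_α φ` (a 3×2 matrix). -/
def gradA (φ : X3 → V3) (x : X3) : M32 :=
  fun i j => fderiv ℝ (fun y => φ y i) x (Pi.single (Fin.castSucc j) 1)

/-- The transverse derivative `∂₃ φ`. -/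
def d3 (φ : X3 → V3) (x : X3) : V3 :=
  fun i => fderiv ℝ (fun y => φ y i) x e3

/-- The 3×3 matrix `(A | c)` whose first two columns form `A` and last column is `c`. -/
def paste (A : M32) (c : V3) : M33 :=
  fun i k => if h : (k : ℕ) < 2 then A i ⟨k, h⟩ else c i

/-- `Q'`-periodicity in the in-plane variables. -/
def PeriodicInPlane (φ : X3 → V3) : Prop :=
  ∀ x : X3, ∀ j : Fin 2, φ (x + Pi.single (Fin.castSucc j) 1) = φ x

/-- The dimension-reduction energy density `Q*W(ξ̄|b)`. -/
def QstarW (W : M33 → ℝ) (ξ : M32) (b : V3) : ℝ :=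
  sInf {E : ℝ | ∃ lam : ℝ, ∃ φ : X3 → V3, 0 < lam ∧ ContDiff ℝ 1 φ ∧
    PeriodicInPlane φ ∧
    (∀ i, lam * ∫ x in cube3, d3 φ x i = b i) ∧
    E = ∫ x in cube3, W (paste (ξ + gradA φ x) (lam • d3 φ x))}


/-- The recession function of a function of 3x3 matrices. -/
def recession (W : M33 → ℝ) (ξ : M33) : ℝ :=
  Filter.limsup (fun t : ℝ => W (t • ξ) / t) Filter.atTop

/-- The recession function of the dimension-reduction density `Q*W`. -/
def recession2 (F : M32 → V3 → ℝ) (ξ : M32) (b : V3) : ℝ :=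
  Filter.limsup (fun t : ℝ => F (t • ξ) (t • b) / t) Filter.atTop

/-- The rank-one 3x2 matrix `z ⊗ ν`. -/
def tens (z : V3) (ν : X2) : M32 := fun i j => z i * ν j

/-!
Rescaling the profile, `φ ↦ t • φ`, identifies `Q*W(t ξ̄ | t b) / t` with `Q*W_t(ξ̄ | b)` for
`W_t η = W (t η) / t`. Since `W^∞` is positively `1`-homogeneous, (H₂) at the point `t η` gives
`|W_t η - W^∞ η| ≤ δ_t (1 + |η|)` with `δ_t = 2 C t^(-r) → 0`, and the coercivity in (H₁) absorbs
this weighted error multiplicatively: `W_t ≤ (1 + δ_t/β') W^∞ + δ_t` and symmetrically.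
Affine comparisons of this kind pass through the infimum defining `Q*`, so
`Q*W_t(ξ̄ | b) → Q*W^∞(ξ̄ | b)`, for every `(ξ̄ | b)`, not only rank-one `ξ̄`.
-/

lemma cube3_eq_pi : cube3 = Set.univ.pi fun _ : Fin 3 => Set.Ioo (-(1:ℝ)/2) (1/2) := by
  ext x; simp [cube3, Set.mem_pi]

lemma volume_cube3 : volume cube3 = 1 := by
  rw [cube3_eq_pi, volume_pi_pi]
  norm_num [Real.volume_Ioo]

lemma Continuous.integrableOn_cube3 {E : Type*} [NormedAddCommGroup E] {f : X3 → E}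
    (hf : Continuous f) : IntegrableOn f cube3 := by
  refine (hf.continuousOn.integrableOn_compact
    (isCompact_univ_pi fun _ => isCompact_Icc (a := -(1:ℝ)/2) (b := 1/2))).mono_set ?_
  rw [cube3_eq_pi]
  exact Set.pi_mono fun _ _ => Set.Ioo_subset_Icc_self

lemma setIntegral_cube3_const (c : ℝ) : ∫ _ in cube3, c = c := by
  simp [Measure.real, volume_cube3]

def cellField (ξ : M32) (lam : ℝ) (φ : X3 → V3) (x : X3) : M33 :=
  paste (ξ + gradA φ x) (lam • d3 φ x)

def Admissible (b : V3) (lam : ℝ) (φ : X3 → V3) : Prop :=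
  0 < lam ∧ ContDiff ℝ 1 φ ∧ PeriodicInPlane φ ∧ ∀ i, lam * ∫ x in cube3, d3 φ x i = b i

lemma fderiv_smul_apply_coord (t : ℝ) (φ : X3 → V3) (i : Fin 3) :
    fderiv ℝ (fun y => (t • φ) y i) = t • fderiv ℝ (fun y => φ y i) :=
  fderiv_const_smul_field t

lemma gradA_smul (t : ℝ) (φ : X3 → V3) (x : X3) : gradA (t • φ) x = t • gradA φ x := by
  ext i j
  show fderiv ℝ (fun y => (t • φ) y i) x _ = t * _
  rw [fderiv_smul_apply_coord]
  rfl

lemma d3_smul (t : ℝ) (φ : X3 → V3) (x : X3) : d3 (t • φ) x = t • d3 φ x := by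
  ext i
  show fderiv ℝ (fun y => (t • φ) y i) x _ = t * _
  rw [fderiv_smul_apply_coord]
  rfl

lemma paste_smul (t : ℝ) (A : M32) (c : V3) : paste (t • A) (t • c) = t • paste A c := by
  ext i k
  by_cases h : (k : ℕ) < 2 <;> simp [paste, h]

lemma cellField_smul (t : ℝ) (ξ : M32) (lam : ℝ) (φ : X3 → V3) (x : X3) :
    cellField (t • ξ) lam (t • φ) x = t • cellField ξ lam φ x := by
  rw [cellField, gradA_smul, d3_smul, smul_comm lam t, ← smul_add, paste_smul, cellField]

lemma continuous_cellField {φ : X3 → V3} (hφ : ContDiff ℝ 1 φ) (ξ : M32) (lam : ℝ) :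
    Continuous (cellField ξ lam φ) := by
  have hD : ∀ i, Continuous fun x => fderiv ℝ (fun y => φ y i) x := fun i =>
    (contDiff_pi.mp hφ i).continuous_fderiv one_ne_zero
  refine continuous_pi fun i => continuous_pi fun k => ?_
  by_cases hk : (k : ℕ) < 2
  · simp only [cellField, paste, hk, dif_pos, Pi.add_apply, gradA]
    fun_prop
  · simp only [cellField, paste, hk, dif_neg, not_false_eq_true, Pi.smul_apply, smul_eq_mul, d3]
    fun_prop

lemma Admissible.smul {b : V3} {lam : ℝ} {φ : X3 → V3} (h : Admissible b lam φ) (t : ℝ) :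
    Admissible (t • b) lam (t • φ) := by
  obtain ⟨hlam, hφ, hper, hmean⟩ := h
  refine ⟨hlam, hφ.const_smul t, fun x j => by simp [hper x j], fun i => ?_⟩
  simp only [d3_smul, Pi.smul_apply, smul_eq_mul, integral_const_mul]
  rw [← hmean i]
  ring

def linearProfile (b : V3) (y : X3) : V3 := y 2 • b

lemma d3_linearProfile (b : V3) (x : X3) : d3 (linearProfile b) x = b := by
  ext i
  have h := ((hasFDerivAt_apply (𝕜 := ℝ) (2 : Fin 3) x).mul_const (b i)).fderiv
  simp [d3, linearProfile, h, e3]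

lemma admissible_linearProfile (b : V3) : Admissible b 1 (linearProfile b) := by
  refine ⟨one_pos, ?_, fun x j => ?_, fun i => ?_⟩
  · exact contDiff_pi.mpr fun i => (contDiff_apply ℝ ℝ (2 : Fin 3)).smul contDiff_const
  · have : (Fin.castSucc j : Fin 3) ≠ 2 := by fin_cases j <;> decide
    simp [linearProfile, this.symm]
  · simp only [d3_linearProfile, one_mul]
    exact setIntegral_cube3_const _

lemma QstarW_le_integral {V : M33 → ℝ} (hV : ∀ η, 0 ≤ V η) {ξ : M32} {b : V3} {lam : ℝ}
    {φ : X3 → V3} (h : Admissible b lam φ) :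
    QstarW V ξ b ≤ ∫ x in cube3, V (cellField ξ lam φ x) :=
  csInf_le ⟨0, fun _ ⟨_, _, _, _, _, _, hE⟩ => hE ▸ integral_nonneg fun _ => hV _⟩
    ⟨lam, φ, h.1, h.2.1, h.2.2.1, h.2.2.2, rfl⟩

lemma le_QstarW {V : M33 → ℝ} {ξ : M32} {b : V3} {a : ℝ}
    (h : ∀ lam φ, Admissible b lam φ → a ≤ ∫ x in cube3, V (cellField ξ lam φ x)) :
    a ≤ QstarW V ξ b := by
  refine le_csInf ⟨_, 1, linearProfile b, (admissible_linearProfile b).1,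
    (admissible_linearProfile b).2.1, (admissible_linearProfile b).2.2.1,
    (admissible_linearProfile b).2.2.2, rfl⟩ ?_
  rintro _ ⟨lam, φ, hlam, hφ, hper, hmean, rfl⟩
  exact h lam φ ⟨hlam, hφ, hper, hmean⟩

lemma QstarW_le_mul_add {V U : M33 → ℝ} {κ δ : ℝ} (hV : Continuous V) (hU : Continuous U)
    (hV0 : ∀ η, 0 ≤ V η) (hκ : 0 < κ) (hVU : ∀ η, V η ≤ κ * U η + δ) (ξ : M32) (b : V3) :
    QstarW V ξ b ≤ κ * QstarW U ξ b + δ := by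
  rw [← sub_le_iff_le_add, ← div_le_iff₀' hκ]
  refine le_QstarW fun lam φ hφ => ?_
  have hm := continuous_cellField hφ.2.1 ξ lam
  have hUm : IntegrableOn (fun x => U (cellField ξ lam φ x)) cube3 :=
    (hU.comp hm).integrableOn_cube3
  rw [div_le_iff₀' hκ, sub_le_iff_le_add]
  calc QstarW V ξ b ≤ ∫ x in cube3, V (cellField ξ lam φ x) := QstarW_le_integral hV0 hφ
    _ ≤ ∫ x in cube3, (κ * U (cellField ξ lam φ x) + δ) :=
      integral_mono (hV.comp hm).integrableOn_cube3
        ((hUm.const_mul κ).add continuous_const.integrableOn_cube3)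
        fun x => hVU _
    _ = κ * (∫ x in cube3, U (cellField ξ lam φ x)) + δ := by
      rw [integral_add (hUm.const_mul κ)
        continuous_const.integrableOn_cube3, integral_const_mul, setIntegral_cube3_const]

lemma QstarW_smul_div {W : M33 → ℝ} (hW0 : ∀ η, 0 ≤ W η) {t : ℝ} (ht : 0 < t) (ξ : M32)
    (b : V3) : QstarW W (t • ξ) (t • b) / t = QstarW (fun η => W (t • η) / t) ξ b := by
  apply le_antisymm
  · refine le_QstarW fun lam φ hφ => ?_
    rw [integral_div]
    gcongr
    simpa only [cellField_smul] using QstarW_le_integral hW0 (hφ.smul t) (ξ := t • ξ)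
  · rw [le_div_iff₀' ht]
    refine le_QstarW fun lam ψ hψ => ?_
    have hφ : Admissible b lam (t⁻¹ • ψ) := by
      simpa only [inv_smul_smul₀ ht.ne'] using hψ.smul t⁻¹
    have hψ_eq : ∀ x, cellField (t • ξ) lam ψ x = t • cellField ξ lam (t⁻¹ • ψ) x := fun x => by
      rw [← cellField_smul, smul_inv_smul₀ ht.ne']
    calc t * QstarW (fun η => W (t • η) / t) ξ b
        ≤ t * ∫ x in cube3, W (t • cellField ξ lam (t⁻¹ • ψ) x) / t := by
          gcongr
          exact QstarW_le_integral (fun η => div_nonneg (hW0 _) ht.le) hφ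
      _ = ∫ x in cube3, W (cellField (t • ξ) lam ψ x) := by
          simp_rw [hψ_eq, integral_div]
          field_simp

section Recession

variable {W : M33 → ℝ} {β : ℝ}

lemma smul_div_mem_Icc (hW0 : ∀ ξ, 0 ≤ W ξ) (hupper : ∀ ξ, W ξ ≤ β * (1 + ‖ξ‖))
    (ξ : M33) {t : ℝ} (ht : 1 ≤ t) : W (t • ξ) / t ∈ Set.Icc 0 (β * (1 + ‖ξ‖)) := by
  have ht0 : 0 < t := one_pos.trans_le ht
  have hβ : 0 ≤ β := by simpa using (hW0 0).trans (hupper 0)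
  refine ⟨div_nonneg (hW0 _) ht0.le, (div_le_iff₀ ht0).2 ?_⟩
  calc W (t • ξ) ≤ β * (1 + t * ‖ξ‖) := by
        simpa [norm_smul, abs_of_pos ht0] using hupper (t • ξ)
    _ ≤ β * (1 + ‖ξ‖) * t := by nlinarith [norm_nonneg ξ]

lemma isBoundedUnder_le_smul_div (hW0 : ∀ ξ, 0 ≤ W ξ) (hupper : ∀ ξ, W ξ ≤ β * (1 + ‖ξ‖))
    (ξ : M33) : IsBoundedUnder (· ≤ ·) atTop fun t : ℝ => W (t • ξ) / t :=
  isBoundedUnder_of_eventually_le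
    ((eventually_ge_atTop 1).mono fun _ ht => (smul_div_mem_Icc hW0 hupper ξ ht).2)

lemma isCoboundedUnder_le_smul_div (hW0 : ∀ ξ, 0 ≤ W ξ) (hupper : ∀ ξ, W ξ ≤ β * (1 + ‖ξ‖))
    (ξ : M33) : IsCoboundedUnder (· ≤ ·) atTop fun t : ℝ => W (t • ξ) / t :=
  (isBoundedUnder_of_eventually_ge ((eventually_ge_atTop 1).mono fun _ ht =>
    (smul_div_mem_Icc hW0 hupper ξ ht).1)).isCoboundedUnder_le

lemma mul_norm_le_smul_div {β' : ℝ} (hlower : ∀ ξ, β' * ‖ξ‖ ≤ W ξ) (ξ : M33) {t : ℝ}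
    (ht : 0 < t) : β' * ‖ξ‖ ≤ W (t • ξ) / t := by
  rw [le_div_iff₀ ht]
  simpa [norm_smul, abs_of_pos ht, mul_comm, mul_left_comm] using hlower (t • ξ)

lemma le_recession {β' : ℝ} (hlower : ∀ ξ, β' * ‖ξ‖ ≤ W ξ) (hW0 : ∀ ξ, 0 ≤ W ξ)
    (hupper : ∀ ξ, W ξ ≤ β * (1 + ‖ξ‖)) (ξ : M33) : β' * ‖ξ‖ ≤ recession W ξ :=
  le_limsup_of_frequently_le ((eventually_gt_atTop 0).mono fun _ ht =>
    mul_norm_le_smul_div hlower ξ ht).frequently (isBoundedUnder_le_smul_div hW0 hupper ξ)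

lemma recession_smul (hW0 : ∀ ξ, 0 ≤ W ξ) (hupper : ∀ ξ, W ξ ≤ β * (1 + ‖ξ‖)) (ξ : M33)
    {s : ℝ} (hs : 0 < s) : recession W (s • ξ) = s * recession W ξ := by
  set F : ℝ → ℝ := fun u => W (u • ξ) / u
  have hmap : map (· * s) atTop = atTop := OrderIso.map_atTop (OrderIso.mulRight₀ s hs)
  have hF_comp : ∀ {p : ℝ → ℝ → Prop}, IsBoundedUnder p atTop F →
      IsBoundedUnder p atTop (F ∘ (· * s)) := fun h => by
    rwa [IsBoundedUnder, ← map_map, hmap]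
  calc recession W (s • ξ) = limsup ((s * ·) ∘ F ∘ (· * s)) atTop := by
        refine limsup_congr ((eventually_gt_atTop 0).mono fun t ht => ?_)
        simp only [Function.comp, F, smul_smul]
        field_simp
    _ = s * limsup (F ∘ (· * s)) atTop :=
        ((monotone_mul_left_of_nonneg hs.le).map_limsup_of_continuousAt _
          (continuous_const_mul s).continuousAt
          (hF_comp (isBoundedUnder_le_smul_div hW0 hupper ξ))
          (hF_comp (isBoundedUnder_of_eventually_ge ((eventually_ge_atTop 1).mono fun _ ht =>
            (smul_div_mem_Icc hW0 hupper ξ ht).1))).isCoboundedUnder_le).symm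
    _ = s * recession W ξ := by rw [limsup_comp, hmap]; rfl

lemma recession_le_add {L : ℝ} (hW0 : ∀ ξ, 0 ≤ W ξ) (hupper : ∀ ξ, W ξ ≤ β * (1 + ‖ξ‖))
    (hLip : ∀ ξ ξ', |W ξ - W ξ'| ≤ L * ‖ξ - ξ'‖) (ξ ξ' : M33) :
    recession W ξ ≤ recession W ξ' + L * ‖ξ - ξ'‖ := by
  have hev : ∀ᶠ t in atTop, W (t • ξ) / t ≤ W (t • ξ') / t + L * ‖ξ - ξ'‖ := by
    filter_upwards [eventually_gt_atTop 0] with t ht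
    rw [div_add' _ _ _ ht.ne', div_le_div_iff_of_pos_right ht]
    have := (abs_le.mp (hLip (t • ξ) (t • ξ'))).2
    rw [← smul_sub, norm_smul, Real.norm_of_nonneg ht.le] at this
    linarith
  calc recession W ξ ≤ limsup (fun t : ℝ => W (t • ξ') / t + L * ‖ξ - ξ'‖) atTop :=
        limsup_le_limsup hev (isCoboundedUnder_le_smul_div hW0 hupper ξ)
          (isBoundedUnder_le_add (isBoundedUnder_le_smul_div hW0 hupper ξ')
            isBoundedUnder_const)
    _ = recession W ξ' + L * ‖ξ - ξ'‖ :=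
        limsup_add_const atTop _ _ (isBoundedUnder_le_smul_div hW0 hupper ξ')
          (isCoboundedUnder_le_smul_div hW0 hupper ξ')

lemma continuous_recession {L : ℝ} (hW0 : ∀ ξ, 0 ≤ W ξ) (hupper : ∀ ξ, W ξ ≤ β * (1 + ‖ξ‖))
    (hLip : ∀ ξ ξ', |W ξ - W ξ'| ≤ L * ‖ξ - ξ'‖) : Continuous (recession W) :=
  (LipschitzWith.of_le_add_mul' L fun ξ ξ' => by
    simpa [dist_eq_norm] using recession_le_add hW0 hupper hLip ξ ξ').continuous

end Recession

lemma Real.rpow_le_one_add {a p : ℝ} (ha : 0 ≤ a) (hp0 : 0 ≤ p) (hp1 : p ≤ 1) :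
    a ^ p ≤ 1 + a := by
  rcases le_total a 1 with h | h
  · linarith [Real.rpow_le_one ha h hp0]
  · linarith [Real.rpow_le_self_of_one_le h hp1]

lemma le_one_add_div_mul_add_of_abs_sub_le {u v n δ β' : ℝ} (hβ' : 0 < β') (hδ : 0 ≤ δ)
    (hvu : |v - u| ≤ δ * (1 + n)) (hu : β' * n ≤ u) : v ≤ (1 + δ / β') * u + δ := by
  have hn : δ * n ≤ δ / β' * u := by
    rw [div_mul_eq_mul_div, le_div_iff₀ hβ']
    nlinarith
  linarith [le_abs_self (v - u)]

lemma abs_smul_div_sub_recession_le {W : M33 → ℝ} {β C r : ℝ} (hW0 : ∀ ξ, 0 ≤ W ξ)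
    (hupper : ∀ ξ, W ξ ≤ β * (1 + ‖ξ‖)) (hC : 0 ≤ C) (hr0 : 0 ≤ r) (hr1 : r ≤ 1)
    (hH2 : ∀ ξ, |recession W ξ - W ξ| ≤ C * (1 + ‖ξ‖ ^ (1 - r))) (η : M33) {t : ℝ}
    (ht : 1 ≤ t) : |W (t • η) / t - recession W η| ≤ 2 * C * t ^ (-r) * (1 + ‖η‖) := by
  have ht0 : 0 < t := one_pos.trans_le ht
  have hs : t ^ (1 - r) = t ^ (-r) * t := by
    rw [sub_eq_neg_add, Real.rpow_add ht0, Real.rpow_one]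
  have hs1 : 1 ≤ t ^ (1 - r) := Real.one_le_rpow ht (by linarith)
  have hdiff : |W (t • η) - recession W (t • η)| ≤ 2 * C * t ^ (1 - r) * (1 + ‖η‖) :=
    calc |W (t • η) - recession W (t • η)| = |recession W (t • η) - W (t • η)| := abs_sub_comm _ _
      _ ≤ C * (1 + ‖t • η‖ ^ (1 - r)) := hH2 _
      _ ≤ C * (1 + t ^ (1 - r) * (1 + ‖η‖)) := by
        rw [norm_smul, Real.norm_of_nonneg ht0.le, Real.mul_rpow ht0.le (norm_nonneg _)]
        gcongr
        exact Real.rpow_le_one_add (norm_nonneg _) (by linarith) (by linarith)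
      _ ≤ 2 * C * t ^ (1 - r) * (1 + ‖η‖) := by
        have : 1 ≤ t ^ (1 - r) * (1 + ‖η‖) := by nlinarith [norm_nonneg η]
        nlinarith [mul_le_mul_of_nonneg_left this hC]
  -- homogeneity of the recession function moves the comparison to the point `t • η`
  have hrec : W (t • η) / t - recession W η = (W (t • η) - recession W (t • η)) / t := by
    rw [recession_smul hW0 hupper η ht0]
    field_simp
  rw [hrec, abs_div, abs_of_pos ht0, div_le_iff₀ ht0]
  calc _ ≤ 2 * C * t ^ (1 - r) * (1 + ‖η‖) := hdiff
    _ = 2 * C * t ^ (-r) * (1 + ‖η‖) * t := by rw [hs]; ring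

lemma QstarW_mem_Icc_of_abs_sub_le {V U : M33 → ℝ} {β' δ : ℝ} (hβ' : 0 < β') (hδ : 0 ≤ δ)
    (hV : Continuous V) (hU : Continuous U) (hVlower : ∀ η, β' * ‖η‖ ≤ V η)
    (hUlower : ∀ η, β' * ‖η‖ ≤ U η) (hVU : ∀ η, |V η - U η| ≤ δ * (1 + ‖η‖)) (ξ : M32)
    (b : V3) :
    QstarW V ξ b ∈
      Set.Icc ((QstarW U ξ b - δ) / (1 + δ / β')) ((1 + δ / β') * QstarW U ξ b + δ) := by
  have hκ : 0 < 1 + δ / β' := by positivity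
  have hnonneg : ∀ {F : M33 → ℝ}, (∀ η, β' * ‖η‖ ≤ F η) → ∀ η, 0 ≤ F η := fun hF η =>
    (mul_nonneg hβ'.le (norm_nonneg η)).trans (hF η)
  refine ⟨?_, QstarW_le_mul_add hV hU (hnonneg hVlower) hκ
    (fun η => le_one_add_div_mul_add_of_abs_sub_le hβ' hδ (hVU η) (hUlower η)) ξ b⟩
  rw [div_le_iff₀' hκ, sub_le_iff_le_add]
  exact QstarW_le_mul_add hU hV (hnonneg hUlower) hκ
    (fun η => le_one_add_div_mul_add_of_abs_sub_le hβ' hδ (abs_sub_comm (V η) _ ▸ hVU η)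
      (hVlower η)) ξ b

theorem tendsto_QstarW_smul_div {W : M33 → ℝ} {β' β L C r : ℝ} (hβ' : 0 < β')
    (hlower : ∀ ξ : M33, β' * ‖ξ‖ ≤ W ξ) (hupper : ∀ ξ : M33, W ξ ≤ β * (1 + ‖ξ‖))
    (hC : 0 ≤ C) (hr : r ∈ Set.Ioo (0 : ℝ) 1)
    (hH2 : ∀ ξ : M33, |recession W ξ - W ξ| ≤ C * (1 + ‖ξ‖ ^ (1 - r)))
    (hLip : ∀ ξ ξ' : M33, |W ξ - W ξ'| ≤ L * ‖ξ - ξ'‖) (ξ : M32) (b : V3) :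
    Tendsto (fun t : ℝ => QstarW W (t • ξ) (t • b) / t) atTop
      (𝓝 (QstarW (recession W) ξ b)) := by
  have hW0 : ∀ η, 0 ≤ W η := fun η => (mul_nonneg hβ'.le (norm_nonneg η)).trans (hlower η)
  have hWc : Continuous W := (LipschitzWith.of_dist_le' fun ξ ξ' => by
    simpa [Real.dist_eq, dist_eq_norm] using hLip ξ ξ').continuous
  set Q := QstarW (recession W) ξ b
  set δ : ℝ → ℝ := fun t => 2 * C * t ^ (-r)
  have hδ : Tendsto δ atTop (𝓝 0) := by
    simpa using (tendsto_rpow_neg_atTop hr.1).const_mul (2 * C)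
  have hbounds : ∀ᶠ t in atTop, QstarW W (t • ξ) (t • b) / t ∈
      Set.Icc ((Q - δ t) / (1 + δ t / β')) ((1 + δ t / β') * Q + δ t) := by
    filter_upwards [eventually_ge_atTop 1] with t ht
    have ht0 : 0 < t := one_pos.trans_le ht
    rw [QstarW_smul_div hW0 ht0]
    refine QstarW_mem_Icc_of_abs_sub_le hβ' (by positivity)
      ((hWc.comp (continuous_const_smul t)).div_const t) (continuous_recession hW0 hupper hLip)
      (mul_norm_le_smul_div hlower · ht0) (le_recession hlower hW0 hupper)
      (abs_smul_div_sub_recession_le hW0 hupper hC hr.1.le hr.2.le hH2 · ht) ξ b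
  refine tendsto_of_tendsto_of_tendsto_of_le_of_le' ?_ ?_ (hbounds.mono fun _ h => h.1)
    (hbounds.mono fun _ h => h.2)
  · have hκ := (tendsto_const_nhds (x := (1 : ℝ))).add (hδ.div_const β')
    have h := ((tendsto_const_nhds (x := Q)).sub hδ).div hκ (by norm_num)
    rwa [sub_zero, zero_div, add_zero, div_one] at h
  · have hκ := (tendsto_const_nhds (x := (1 : ℝ))).add (hδ.div_const β')
    simpa using (hκ.mul_const Q).add hδ

theorem stmt9_general (W : M33 → ℝ) (β' β L C r : ℝ) (hβ' : 0 < β')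
    (hlower : ∀ ξ : M33, β' * ‖ξ‖ ≤ W ξ)
    (hupper : ∀ ξ : M33, W ξ ≤ β * (1 + ‖ξ‖))
    (hC : 0 < C) (hr : r ∈ Set.Ioo (0 : ℝ) 1)
    (hH2 : ∀ ξ : M33, |recession W ξ - W ξ| ≤ C * (1 + ‖ξ‖ ^ (1 - r)))
    (hLip : ∀ ξ ξ' : M33, |W ξ - W ξ'| ≤ L * ‖ξ - ξ'‖) :
    ∀ (z b : V3) (ν : X2), ν 0 ^ 2 + ν 1 ^ 2 = 1 →
      recession2 (QstarW W) (tens z ν) b = QstarW (recession W) (tens z ν) b := fun z b ν _ =>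
  (tendsto_QstarW_smul_div hβ' hlower hupper hC.le hr hH2 hLip (tens z ν) b).limsup_eq

theorem stmt9 (W : M33 → ℝ) (β' β L C r : ℝ) (hβ' : 0 < β') (hββ : β' ≤ β)
    (hlower : ∀ ξ : M33, β' * ‖ξ‖ ≤ W ξ)
    (hupper : ∀ ξ : M33, W ξ ≤ β * (1 + ‖ξ‖))
    (hC : 0 < C) (hr : r ∈ Set.Ioo (0 : ℝ) 1)
    (hH2 : ∀ ξ : M33, |recession W ξ - W ξ| ≤ C * (1 + ‖ξ‖ ^ (1 - r)))
    (hLip : ∀ ξ ξ' : M33, |W ξ - W ξ'| ≤ L * ‖ξ - ξ'‖) :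
    ∀ (z b : V3) (ν : X2), ν 0 ^ 2 + ν 1 ^ 2 = 1 →
      recession2 (QstarW W) (tens z ν) b = QstarW (recession W) (tens z ν) b :=
  stmt9_general W β' β L C r hβ' hlower hupper hC hr hH2 hLip
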